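/- Let h : [0,∞) → ℝ be Lipschitz, and f_h the standard solution of the half-normal Stein equation. Then f_h is twice differentiable almost everywhere and sup_{x≥0} |f_h''(x)| ≤ 2‖h'‖_∞. -/

import Mathlib

/-! Extending `h` to a Lipschitz function on `ℝ` changes neither `E h(|Z|)` nor `f_h` on
`[0, ∞)`. Differentiating the Stein equation `f' = x f + g`, `g = h - E h(|Z|)`, gives
`f'' = (1 + x²) f + x g + h'` wherever `h` is differentiable, hence almost everywhere by
Rademacher's theorem. As `|h'| ≤ L`, it remains to bound `|(1 + x²) f(x) + x g(x)| ≤ L`.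
Because `∫₀^∞ g φ = 0`, the quantity `φ(x) ((1 + x²) f(x) + x g(x))` is a combination, with
nonnegative weights, of the increments `∫₀ˣ (g(x) - g(t)) φ(t) dt` and
`∫ₓ^∞ (g(x) - g(s)) φ(s) ds`; the Lipschitz bounds on these increments add up to at most
`L φ(x)`. -/

open MeasureTheory ProbabilityTheory Real

/-- Standard normal density. -/
noncomputable def stdPhi (x : ℝ) : ℝ := Real.exp (-x^2/2) / Real.sqrt (2*Real.pi)

/-- `E[h(|Z|)]` for `Z` standard normal. -/
noncomputable def Ehn (h : ℝ → ℝ) : ℝ := ∫ z, h |z| ∂(gaussianReal 0 1)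

/-- The standard solution of the half-normal Stein equation. -/
noncomputable def fh (h : ℝ → ℝ) (x : ℝ) : ℝ :=
  (stdPhi x)⁻¹ * ∫ t in (0:ℝ)..x, (h t - Ehn h) * stdPhi t

open Set Filter Topology

lemma stdPhi_eq_gaussianPDFReal : stdPhi = gaussianPDFReal 0 1 := by
  ext x
  simp [stdPhi, gaussianPDFReal, div_eq_inv_mul]

lemma stdPhi_eq_mul_exp (x : ℝ) : stdPhi x = (√(2 * π))⁻¹ * rexp (-(1 / 2) * x ^ 2) := by
  rw [stdPhi, div_eq_inv_mul]; ring_nf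

lemma stdPhi_pos (x : ℝ) : 0 < stdPhi x :=
  stdPhi_eq_gaussianPDFReal ▸ gaussianPDFReal_pos 0 1 x one_ne_zero

lemma stdPhi_abs (x : ℝ) : stdPhi |x| = stdPhi x := by
  simp [stdPhi]

@[fun_prop]
lemma continuous_stdPhi : Continuous stdPhi := by
  unfold stdPhi; fun_prop

lemma hasDerivAt_stdPhi (x : ℝ) : HasDerivAt stdPhi (-x * stdPhi x) x := by
  have hexp : HasDerivAt (fun y ↦ -y ^ 2 / 2) (-x) x :=
    ((hasDerivAt_pow 2 x).neg.div_const 2).congr_deriv (by push_cast; ring)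
  exact (hexp.exp.div_const _).congr_deriv (by rw [stdPhi]; ring)

lemma integrable_pow_mul_stdPhi (n : ℕ) : Integrable fun s ↦ s ^ n * stdPhi s := by
  have := (integrable_rpow_mul_exp_neg_mul_sq (b := 1 / 2) (by norm_num)
    (s := n) (by linarith [n.cast_nonneg (α := ℝ)])).const_mul (√(2 * π))⁻¹
  refine this.congr (ae_of_all _ fun s ↦ ?_)
  simp only [rpow_natCast, stdPhi_eq_mul_exp]; ring

lemma tendsto_pow_mul_stdPhi_atTop (n : ℕ) :
    Tendsto (fun s ↦ s ^ n * stdPhi s) atTop (𝓝 0) := by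
  have := ((tendsto_rpow_abs_mul_exp_neg_mul_sq_cocompact (a := 1 / 2) (by norm_num)
    n).mono_left atTop_le_cocompact).const_mul (√(2 * π))⁻¹
  rw [mul_zero] at this
  refine this.congr' ?_
  filter_upwards [eventually_ge_atTop 0] with s hs
  rw [abs_of_nonneg hs, rpow_natCast, stdPhi_eq_mul_exp]; ring

lemma integrable_stdPhi : Integrable stdPhi := by
  simpa using integrable_pow_mul_stdPhi 0

lemma integral_Ioi_zero_stdPhi : ∫ s in Ioi 0, stdPhi s = 1 / 2 := by
  have h := integral_comp_abs (f := stdPhi)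
  simp only [stdPhi_abs] at h
  rw [stdPhi_eq_gaussianPDFReal, integral_gaussianPDFReal_eq_one 0 one_ne_zero] at h
  rw [stdPhi_eq_gaussianPDFReal]
  linarith

lemma integral_Ioi_mul_stdPhi (x : ℝ) : ∫ s in Ioi x, s * stdPhi s = stdPhi x := by
  have := integral_Ioi_of_hasDerivAt_of_tendsto (f := fun s ↦ -stdPhi s)
    (f' := fun s ↦ s * stdPhi s) (a := x) (m := 0) continuous_stdPhi.neg.continuousWithinAt
    (fun s _ ↦ (hasDerivAt_stdPhi s).neg.congr_deriv (by ring)) ?_ ?_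
  · simpa using this
  · simpa using (integrable_pow_mul_stdPhi 1).integrableOn
  · simpa using (tendsto_pow_mul_stdPhi_atTop 0).neg

lemma integral_Ioi_sq_mul_stdPhi (x : ℝ) :
    ∫ s in Ioi x, s ^ 2 * stdPhi s = x * stdPhi x + ∫ s in Ioi x, stdPhi s := by
  have hint : IntegrableOn (fun s ↦ s ^ 2 * stdPhi s) (Ioi x) :=
    (integrable_pow_mul_stdPhi 2).integrableOn
  have := integral_Ioi_of_hasDerivAt_of_tendsto (f := fun s ↦ -(s * stdPhi s))
    (f' := fun s ↦ s ^ 2 * stdPhi s - stdPhi s) (a := x) (m := 0)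
    (continuous_id.mul continuous_stdPhi).neg.continuousWithinAt
    (fun s _ ↦ ((hasDerivAt_id s).mul (hasDerivAt_stdPhi s)).neg.congr_deriv
      (by simp only [id_eq, one_mul]; ring))
    (hint.sub integrable_stdPhi.integrableOn)
    (by simpa using (tendsto_pow_mul_stdPhi_atTop 1).neg)
  rw [integral_sub hint integrable_stdPhi.integrableOn] at this
  linarith

lemma intervalIntegral_mul_stdPhi (x : ℝ) : ∫ t in 0..x, t * stdPhi t = stdPhi 0 - stdPhi x := by
  have := intervalIntegral.integral_eq_sub_of_hasDerivAt (f := fun s ↦ -stdPhi s)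
    (f' := fun t ↦ t * stdPhi t) (fun t _ ↦ (hasDerivAt_stdPhi t).neg.congr_deriv (by ring))
    ((by fun_prop : Continuous fun t ↦ t * stdPhi t).intervalIntegrable 0 x)
  rw [this]; ring

lemma LipschitzWith.integrable_mul_stdPhi {L : NNReal} {g : ℝ → ℝ} (hg : LipschitzWith L g) :
    Integrable fun s ↦ g s * stdPhi s := by
  have hmoment : Integrable fun s ↦ ‖s * stdPhi s‖ := by
    simpa using (integrable_pow_mul_stdPhi 1).norm
  refine Integrable.mono' ((integrable_stdPhi.const_mul |g 0|).add (hmoment.const_mul L))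
    (hg.continuous.mul continuous_stdPhi).aestronglyMeasurable (ae_of_all _ fun s ↦ ?_)
  have hgrowth : |g s| ≤ |g 0| + L * |s| := by
    have := hg.dist_le_mul s 0
    rw [Real.dist_eq, Real.dist_eq, sub_zero] at this
    linarith [abs_sub_abs_le_abs_sub (g s) (g 0)]
  have hφ := (stdPhi_pos s).le
  simp only [Pi.add_apply, Real.norm_eq_abs, abs_mul, abs_of_nonneg hφ]
  nlinarith

lemma Ehn_eq_two_mul_integral_Ioi (h : ℝ → ℝ) :
    Ehn h = 2 * ∫ s in Ioi 0, h s * stdPhi s := by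
  rw [Ehn, integral_gaussianReal_eq_integral_smul one_ne_zero, ← stdPhi_eq_gaussianPDFReal,
    ← integral_comp_abs (f := fun s ↦ h s * stdPhi s)]
  simp only [smul_eq_mul, stdPhi_abs, mul_comm]

lemma LipschitzWith.integral_Ioi_sub_Ehn_mul_stdPhi {L : NNReal} {h : ℝ → ℝ}
    (hh : LipschitzWith L h) : ∫ s in Ioi 0, (h s - Ehn h) * stdPhi s = 0 := by
  simp only [sub_mul]
  rw [integral_sub hh.integrable_mul_stdPhi.integrableOn
    (integrable_stdPhi.const_mul _).integrableOn, integral_const_mul, integral_Ioi_zero_stdPhi,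
    Ehn_eq_two_mul_integral_Ioi]
  ring

lemma fh_eqOn_Ici {h h' : ℝ → ℝ} (hEq : EqOn h h' (Ici 0)) : EqOn (fh h) (fh h') (Ici 0) := by
  have hE : Ehn h = Ehn h' := by
    simp only [Ehn, fun z : ℝ ↦ hEq (mem_Ici.2 (abs_nonneg z))]
  intro x hx
  rw [fh, fh, hE]
  congr 1
  refine intervalIntegral.integral_congr fun t ht ↦ ?_
  rw [uIcc_of_le hx] at ht
  simp only [hEq ht.1]

lemma hasDerivAt_fh {h : ℝ → ℝ} (hh : Continuous h) (y : ℝ) :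
    HasDerivAt (fh h) (y * fh h y + (h y - Ehn h)) y := by
  have hc : Continuous fun t ↦ (h t - Ehn h) * stdPhi t := by fun_prop
  have hI := intervalIntegral.integral_hasDerivAt_right (hc.intervalIntegrable 0 y)
    (hc.stronglyMeasurableAtFilter _ _) hc.continuousAt
  have hφ := (stdPhi_pos y).ne'
  have hinv : HasDerivAt (fun u ↦ (stdPhi u)⁻¹) (y * (stdPhi y)⁻¹) y :=
    ((hasDerivAt_stdPhi y).inv hφ).congr_deriv (by field_simp)
  exact (hinv.mul hI).congr_deriv (by rw [fh]; field_simp)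

lemma hasDerivAt_deriv_fh {h : ℝ → ℝ} {h' x : ℝ} (hc : Continuous h)
    (hd : HasDerivAt h h' x) :
    HasDerivAt (deriv (fh h)) ((1 + x ^ 2) * fh h x + x * (h x - Ehn h) + h') x := by
  have hderiv : deriv (fh h) = fun y ↦ y * fh h y + (h y - Ehn h) :=
    funext fun y ↦ (hasDerivAt_fh hc y).deriv
  rw [hderiv]
  exact (((hasDerivAt_id x).mul (hasDerivAt_fh hc x)).add (hd.sub_const _)).congr_deriv
    (by simp only [id_eq]; ring)

namespace LipschitzWith

variable {L : NNReal} {g : ℝ → ℝ}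

lemma abs_mul_intervalIntegral_stdPhi_sub_le (hg : LipschitzWith L g) {x : ℝ} (hx : 0 ≤ x) :
    |g x * (∫ t in 0..x, stdPhi t) - ∫ t in 0..x, g t * stdPhi t| ≤
      L * (x * (∫ t in 0..x, stdPhi t) - stdPhi 0 + stdPhi x) := by
  have hφ : IntervalIntegrable stdPhi volume 0 x := continuous_stdPhi.intervalIntegrable 0 x
  have hmoment : IntervalIntegrable (fun t ↦ t * stdPhi t) volume 0 x :=
    (by fun_prop : Continuous fun t ↦ t * stdPhi t).intervalIntegrable 0 x
  have hdiff : g x * (∫ t in 0..x, stdPhi t) - ∫ t in 0..x, g t * stdPhi t =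
      ∫ t in 0..x, (g x - g t) * stdPhi t := by
    simp only [sub_mul]
    have hgφ : IntervalIntegrable (fun t ↦ g t * stdPhi t) volume 0 x :=
      (hg.continuous.mul continuous_stdPhi).intervalIntegrable 0 x
    rw [intervalIntegral.integral_sub (hφ.const_mul _) hgφ, intervalIntegral.integral_const_mul]
  have hweight : ∫ t in 0..x, L * ((x - t) * stdPhi t) =
      L * (x * (∫ t in 0..x, stdPhi t) - stdPhi 0 + stdPhi x) := by
    simp only [sub_mul]
    rw [intervalIntegral.integral_const_mul,
      intervalIntegral.integral_sub (hφ.const_mul _) hmoment, intervalIntegral.integral_const_mul,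
      intervalIntegral_mul_stdPhi]
    ring
  rw [hdiff, ← hweight, ← Real.norm_eq_abs]
  refine intervalIntegral.norm_integral_le_of_norm_le hx (ae_of_all _ fun t ht ↦ ?_)
    ((((hφ.const_mul x).sub hmoment).const_mul L).congr fun t _ ↦ by ring)
  have := hg.dist_le_mul x t
  rw [Real.dist_eq, Real.dist_eq, abs_of_nonneg (by linarith [ht.2] : 0 ≤ x - t)] at this
  rw [norm_mul, Real.norm_eq_abs, Real.norm_of_nonneg (stdPhi_pos t).le, ← mul_assoc]
  exact mul_le_mul_of_nonneg_right this (stdPhi_pos t).le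

lemma abs_mul_integral_Ioi_stdPhi_sub_le (hg : LipschitzWith L g) (x : ℝ) :
    |g x * (∫ s in Ioi x, stdPhi s) - ∫ s in Ioi x, g s * stdPhi s| ≤
      L * (stdPhi x - x * ∫ s in Ioi x, stdPhi s) := by
  have hφ : IntegrableOn stdPhi (Ioi x) := integrable_stdPhi.integrableOn
  have hmoment : IntegrableOn (fun s ↦ s * stdPhi s) (Ioi x) := by
    simpa using (integrable_pow_mul_stdPhi 1).integrableOn
  have hdiff : g x * (∫ s in Ioi x, stdPhi s) - ∫ s in Ioi x, g s * stdPhi s =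
      ∫ s in Ioi x, (g x - g s) * stdPhi s := by
    simp only [sub_mul]
    rw [integral_sub (hφ.const_mul _) hg.integrable_mul_stdPhi.integrableOn, integral_const_mul]
  have hweight : ∫ s in Ioi x, L * ((s - x) * stdPhi s) =
      L * (stdPhi x - x * ∫ s in Ioi x, stdPhi s) := by
    simp only [sub_mul]
    rw [integral_const_mul, integral_sub hmoment (hφ.const_mul _), integral_const_mul,
      integral_Ioi_mul_stdPhi]
  rw [hdiff, ← hweight, ← Real.norm_eq_abs]
  refine norm_integral_le_of_norm_le ((hmoment.sub (hφ.const_mul x)).const_mul L |>.congr ?_) ?_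
  · exact ae_of_all _ fun s ↦ by simp only [Pi.sub_apply]; ring
  filter_upwards [ae_restrict_mem measurableSet_Ioi] with s hs
  have := hg.dist_le_mul x s
  rw [Real.dist_eq, Real.dist_eq, abs_sub_comm x s,
    abs_of_nonneg (by linarith [mem_Ioi.1 hs] : 0 ≤ s - x)] at this
  rw [norm_mul, Real.norm_eq_abs, Real.norm_of_nonneg (stdPhi_pos s).le, ← mul_assoc]
  exact mul_le_mul_of_nonneg_right this (stdPhi_pos s).le

end LipschitzWith

lemma mul_stdPhi_le_one_add_sq_mul_integral_Ioi (x : ℝ) :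
    x * stdPhi x ≤ (1 + x ^ 2) * ∫ s in Ioi x, stdPhi s := by
  have hφ : IntegrableOn stdPhi (Ioi x) := integrable_stdPhi.integrableOn
  have h1 : IntegrableOn (fun s ↦ s * stdPhi s) (Ioi x) := by
    simpa using (integrable_pow_mul_stdPhi 1).integrableOn
  have h2 : IntegrableOn (fun s ↦ s ^ 2 * stdPhi s) (Ioi x) :=
    (integrable_pow_mul_stdPhi 2).integrableOn
  have hexpand : ∫ s in Ioi x, (s - x) ^ 2 * stdPhi s =
      (1 + x ^ 2) * (∫ s in Ioi x, stdPhi s) - x * stdPhi x := by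
    have : (fun s ↦ (s - x) ^ 2 * stdPhi s) =
        fun s ↦ s ^ 2 * stdPhi s - 2 * x * (s * stdPhi s) + x ^ 2 * stdPhi s := by
      ext s; ring
    have h21 : IntegrableOn (fun s ↦ s ^ 2 * stdPhi s - 2 * x * (s * stdPhi s)) (Ioi x) :=
      h2.sub (h1.const_mul _)
    rw [this, integral_add h21 (hφ.const_mul _), integral_sub h2 (h1.const_mul _),
      integral_const_mul, integral_const_mul,
      integral_Ioi_sq_mul_stdPhi, integral_Ioi_mul_stdPhi]
    ring
  have hnonneg : 0 ≤ ∫ s in Ioi x, (s - x) ^ 2 * stdPhi s :=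
    setIntegral_nonneg measurableSet_Ioi fun s _ ↦ mul_nonneg (sq_nonneg _) (stdPhi_pos s).le
  linarith

lemma intervalIntegral_stdPhi_add_integral_Ioi (x : ℝ) :
    (∫ t in 0..x, stdPhi t) + ∫ s in Ioi x, stdPhi s = 1 / 2 := by
  rw [intervalIntegral.integral_interval_add_Ioi integrable_stdPhi.integrableOn
    integrable_stdPhi.integrableOn, integral_Ioi_zero_stdPhi]

/-- With `P = ∫₀ˣ φ`, `Q = ∫ₓ^∞ φ`, `I = ∫₀ˣ g φ = -∫ₓ^∞ g φ` and `P + Q = 1/2`,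
`(1 + x²) I + x g(x) φ(x) = 2 (g(x) Q + I) K₂ - 2 (g(x) P - I) K₁` with the nonnegative weights
`K₁ = (1 + x²) Q - x φ(x)`, `K₂ = (1 + x²) P + x φ(x)`. The two brackets are the Lipschitz
increments bounded above, and their weights recombine to at most `φ(x) / 2`. -/
lemma LipschitzWith.abs_one_add_sq_mul_integral_add_le {L : NNReal} {g : ℝ → ℝ}
    (hg : LipschitzWith L g) (hcenter : ∫ s in Ioi 0, g s * stdPhi s = 0) {x : ℝ} (hx : 0 ≤ x) :
    |(1 + x ^ 2) * (∫ t in 0..x, g t * stdPhi t) + x * g x * stdPhi x| ≤ L * stdPhi x := by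
  set P := ∫ t in 0..x, stdPhi t
  set Q := ∫ s in Ioi x, stdPhi s
  set I := ∫ t in 0..x, g t * stdPhi t
  have hPQ : P + Q = 1 / 2 := intervalIntegral_stdPhi_add_integral_Ioi x
  have hIR : ∫ s in Ioi x, g s * stdPhi s = -I := by
    have := intervalIntegral.integral_interval_add_Ioi hg.integrable_mul_stdPhi.integrableOn
      hg.integrable_mul_stdPhi.integrableOn (a := 0) (b := x)
    linarith
  have hD₁ : |g x * P - I| ≤ L * (x * P - stdPhi 0 + stdPhi x) :=
    hg.abs_mul_intervalIntegral_stdPhi_sub_le hx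
  have hD₂ : |g x * Q + I| ≤ L * (stdPhi x - x * Q) := by
    simpa only [hIR, sub_neg_eq_add] using hg.abs_mul_integral_Ioi_stdPhi_sub_le x
  have hK₁ : 0 ≤ (1 + x ^ 2) * Q - x * stdPhi x :=
    sub_nonneg.2 (mul_stdPhi_le_one_add_sq_mul_integral_Ioi x)
  have hK₂ : 0 ≤ (1 + x ^ 2) * P + x * stdPhi x :=
    add_nonneg (mul_nonneg (by positivity)
      (intervalIntegral.integral_nonneg hx fun t _ ↦ (stdPhi_pos t).le))
      (mul_nonneg hx (stdPhi_pos x).le)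
  calc |(1 + x ^ 2) * I + x * g x * stdPhi x|
      = |2 * (g x * Q + I) * ((1 + x ^ 2) * P + x * stdPhi x)
          - 2 * (g x * P - I) * ((1 + x ^ 2) * Q - x * stdPhi x)| := by
        congr 1; linear_combination (-2 * (g x * x * stdPhi x + (1 + x ^ 2) * I)) * hPQ
    _ ≤ 2 * |g x * Q + I| * ((1 + x ^ 2) * P + x * stdPhi x)
          + 2 * |g x * P - I| * ((1 + x ^ 2) * Q - x * stdPhi x) := by
        refine (abs_sub _ _).trans_eq ?_
        rw [abs_mul, abs_mul, abs_mul, abs_mul, abs_of_nonneg hK₁, abs_of_nonneg hK₂, abs_two]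
    _ ≤ 2 * (L * (stdPhi x - x * Q)) * ((1 + x ^ 2) * P + x * stdPhi x)
          + 2 * (L * (x * P - stdPhi 0 + stdPhi x)) * ((1 + x ^ 2) * Q - x * stdPhi x) := by
        gcongr
    _ = L * (stdPhi x - 2 * stdPhi 0 * ((1 + x ^ 2) * Q - x * stdPhi x)) := by
        linear_combination 2 * L * stdPhi x * hPQ
    _ ≤ L * stdPhi x := by
        have := (stdPhi_pos 0).le
        gcongr; nlinarith

theorem LipschitzWith.abs_one_add_sq_mul_fh_add_le {L : NNReal} {h : ℝ → ℝ}
    (hh : LipschitzWith L h) {x : ℝ} (hx : 0 ≤ x) :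
    |(1 + x ^ 2) * fh h x + x * (h x - Ehn h)| ≤ (L : ℝ) := by
  have hg : LipschitzWith L fun t ↦ h t - Ehn h :=
    LipschitzWith.of_dist_le_mul fun a b ↦ by
      simpa only [dist_sub_right] using hh.dist_le_mul a b
  have hweighted := hg.abs_one_add_sq_mul_integral_add_le hh.integral_Ioi_sub_Ehn_mul_stdPhi hx
  have hφ := stdPhi_pos x
  have hfh : (1 + x ^ 2) * fh h x + x * (h x - Ehn h) =
      ((1 + x ^ 2) * (∫ t in 0..x, (h t - Ehn h) * stdPhi t) + x * (h x - Ehn h) * stdPhi x)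
        / stdPhi x := by
    rw [fh]; field_simp
  rwa [hfh, abs_div, abs_of_pos hφ, div_le_iff₀ hφ]

theorem stmt10 (h : ℝ → ℝ) (L : NNReal) (hh : LipschitzOnWith L h (Set.Ici 0)) :
    ∀ᵐ x ∂(volume.restrict (Set.Ici (0:ℝ))),
      ∃ d : ℝ, HasDerivAt (deriv (fh h)) d x ∧ |d| ≤ 2 * (L : ℝ) := by
  obtain ⟨h', hh', hEq⟩ := hh.extend_real
  rw [← restrict_Ioi_eq_restrict_Ici]
  filter_upwards [ae_restrict_mem measurableSet_Ioi,
    ae_restrict_of_ae hh'.ae_differentiableAt] with x hx hdiff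
  have hlocal : fh h =ᶠ[𝓝 x] fh h' :=
    eventually_of_mem (Ioi_mem_nhds hx) fun y hy ↦ fh_eqOn_Ici hEq (mem_Ici.2 hy.le)
  refine ⟨_, (hasDerivAt_deriv_fh hh'.continuous hdiff.hasDerivAt).congr_of_eventuallyEq
    hlocal.deriv, ?_⟩
  calc _ ≤ |(1 + x ^ 2) * fh h' x + x * (h' x - Ehn h')| + |deriv h' x| := abs_add_le _ _
    _ ≤ L + L :=
      add_le_add (hh'.abs_one_add_sq_mul_fh_add_le hx.le) (norm_deriv_le_of_lipschitz hh')
    _ = 2 * L := by ring
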